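/- Let I be a left rooted quiver, A an abelian category with exact coproducts, and suppose for each arrow a : i → j an exact coproduct-preserving functor D_a : A → A is given (forming an I-diagram). Let Q_• be a family of full subcategories with D_a(Q_i) ⊆ Q_j for all arrows a. If ω : M → N is a morphism of representations over this diagram such that for every vertex i the induced morphism ρ_i : M_i ⊔_{L_i(M)} L_i(N) → N_i (from the pushout of the latching maps) is a monomorphism with cokernel in Q_i, then ω is a monomorphism, i.e. each ω_i is a monomorphism. -/

import Mathlib

/-!
Induct along the root filtration. At a vertex `i` every predecessor `j` already has `ω_j` mono;
the left exact functors `D_a` keep `D_a(ω_j)` mono, and by AB4 so is their coproduct `L_i(ω)`.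
In an abelian category the cobase change `pushout.inl` of the mono `L_i(ω)` is mono, hence so is
`ω_i = pushout.inl ≫ ρ_i`.
-/

universe v u

namespace Paper

open CategoryTheory CategoryTheory.Limits

noncomputable def rootFiltration (V : Type v) [Quiver V] (χ : Ordinal.{v}) : Set V :=
  Ordinal.limitRecOn χ
    (∅ : Set V)
    (fun _ W => W ∪ { i : V | ∀ ⦃j : V⦄, (j ⟶ i) → j ∈ W })
    (fun χ' _ ih => ⋃ (μ : Ordinal.{v}) (h : μ < χ'), ih μ h)

/-- A quiver is left rooted if the transfinite sequence `V_χ` exhausts all the vertices. -/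
def IsLeftRooted (V : Type v) [Quiver V] : Prop :=
  ∃ lam : Ordinal.{v}, rootFiltration V lam = Set.univ

variable {V : Type v} [Quiver.{v} V] {A : Type u} [Category.{v} A]

/-- A representation over the `I`-diagram on `A` determined by the transition functors
`D_a : A ⥤ A` attached to the arrows of the quiver `V`. -/
structure DiaRep (D : ∀ ⦃i j : V⦄, (i ⟶ j) → (A ⥤ A)) where
  obj : V → A
  map : ∀ ⦃i j : V⦄ (a : i ⟶ j), (D a).obj (obj i) ⟶ obj j

variable (D : ∀ ⦃i j : V⦄, (i ⟶ j) → (A ⥤ A))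

/-- The latching object `L_i(M) = ⨁_{a ∈ I(•,i)} D_a (M_{s(a)})`. -/
noncomputable def latchObj [HasCoproducts.{v} A] (M : DiaRep D) (i : V) : A :=
  ∐ fun p : Σ j : V, j ⟶ i => (D p.2).obj (M.obj p.1)

/-- The latching map `φᵢᴹ : L_i(M) ⟶ M_i`. -/
noncomputable def latchMap [HasCoproducts.{v} A] (M : DiaRep D) (i : V) :
    latchObj D M i ⟶ M.obj i :=
  Sigma.desc fun p => M.map p.2

/-- A morphism of representations over the diagram `D`. -/
structure DiaRepHom (M N : DiaRep D) where
  app : ∀ i : V, M.obj i ⟶ N.obj i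
  naturality : ∀ ⦃i j : V⦄ (a : i ⟶ j),
    (D a).map (app i) ≫ N.map a = M.map a ≫ app j

/-- The induced morphism `L_i(ω) : L_i(M) ⟶ L_i(N)` on latching objects. -/
noncomputable def latchHom [HasCoproducts.{v} A] {M N : DiaRep D} (ω : DiaRepHom D M N)
    (i : V) : latchObj D M i ⟶ latchObj D N i :=
  Limits.Sigma.map fun p => (D p.2).map (ω.app p.1)

end Paper

namespace Paper

open CategoryTheory CategoryTheory.Limits

section RootFiltration

variable {V : Type v} [Quiver V]

lemma rootFiltration_zero : rootFiltration V 0 = ∅ :=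
  Ordinal.limitRecOn_zero ..

lemma rootFiltration_add_one (χ : Ordinal.{v}) :
    rootFiltration V (χ + 1) =
      rootFiltration V χ ∪ {i | ∀ ⦃j : V⦄, (j ⟶ i) → j ∈ rootFiltration V χ} :=
  Ordinal.limitRecOn_add_one ..

lemma rootFiltration_of_isSuccLimit {χ : Ordinal.{v}} (hχ : Order.IsSuccLimit χ) :
    rootFiltration V χ = ⋃ (μ : Ordinal.{v}) (_ : μ < χ), rootFiltration V μ :=
  Ordinal.limitRecOn_limit _ _ _ _ hχ

theorem IsLeftRooted.induction (hV : IsLeftRooted V) {P : V → Prop}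
    (step : ∀ i, (∀ ⦃j : V⦄, (j ⟶ i) → P j) → P i) (i : V) : P i := by
  suffices h : ∀ χ, ∀ i ∈ rootFiltration V χ, P i by
    obtain ⟨lam, hlam⟩ := hV
    exact h lam i (hlam ▸ Set.mem_univ i)
  intro χ
  induction χ using Ordinal.limitRecOn with
  | zero => simp [rootFiltration_zero]
  | add_one χ ih =>
    intro i hi
    rw [rootFiltration_add_one] at hi
    rcases hi with hi | hi
    · exact ih i hi
    · exact step i fun j a => ih j (hi a)
  | limit χ hχ ih =>
    intro i hi
    rw [rootFiltration_of_isSuccLimit hχ, Set.mem_iUnion₂] at hi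
    obtain ⟨μ, hμ, hi⟩ := hi
    exact ih μ hμ i hi

end RootFiltration

section Latching

variable {V : Type v} [Quiver.{v} V] {A : Type u} [Category.{v} A] [HasCoproducts.{v} A]
  {D : ∀ ⦃i j : V⦄, (i ⟶ j) → (A ⥤ A)} {M N : DiaRep D}

lemma latchMap_comp_app (ω : DiaRepHom D M N) (i : V) :
    latchMap D M i ≫ ω.app i = latchHom D ω i ≫ latchMap D N i := by
  refine Sigma.hom_ext _ _ fun p => ?_
  simpa [latchMap, latchHom, latchObj] using (ω.naturality p.2).symm

lemma mono_latchHom [(MorphismProperty.monomorphisms A).IsStableUnderCoproducts.{v}]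
    (ω : DiaRepHom D M N) (i : V) (h : ∀ ⦃j : V⦄ (a : j ⟶ i), Mono ((D a).map (ω.app j))) :
    Mono (latchHom D ω i) :=
  have := fun p : Σ j : V, j ⟶ i => h p.2
  inferInstanceAs (Mono (Limits.Sigma.map _))

end Latching

end Paper

open Paper CategoryTheory CategoryTheory.Limits in
theorem stmt18_general {V : Type v} [Quiver.{v} V] (hV : IsLeftRooted V)
    {A : Type u} [Category.{v} A] [Abelian A] [HasCoproducts.{v} A] [AB4 A]
    (D : ∀ ⦃i j : V⦄, (i ⟶ j) → (A ⥤ A))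
    (hDexact : ∀ ⦃i j : V⦄ (a : i ⟶ j),
      Nonempty (PreservesFiniteLimits (D a)) ∧ Nonempty (PreservesFiniteColimits (D a)))
    (Q : V → A → Prop)
    (M N : DiaRep D) (ω : DiaRepHom D M N)
    (hρ : ∀ (i : V) (ρ : pushout (latchMap D M i) (latchHom D ω i) ⟶ N.obj i),
      pushout.inl _ _ ≫ ρ = ω.app i → pushout.inr _ _ ≫ ρ = latchMap D N i →
      Mono ρ ∧ Q i (cokernel ρ)) :
    ∀ i : V, Mono (ω.app i) := by
  refine hV.induction fun i hpred => ?_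
  have : Mono (latchHom D ω i) := mono_latchHom ω i fun j a =>
    have := (hDexact a).1.some
    have := hpred a
    (D a).map_mono (ω.app j)
  have hinl := pushout.inl_desc _ _ (latchMap_comp_app ω i)
  obtain ⟨hmono, -⟩ := hρ i _ hinl (pushout.inr_desc _ _ _)
  rw [← hinl]
  exact mono_comp _ _

open Paper CategoryTheory CategoryTheory.Limits in
theorem stmt18 {V : Type v} [Quiver.{v} V] (hV : IsLeftRooted V)
    {A : Type u} [Category.{v} A] [Abelian A] [HasCoproducts.{v} A] [AB4 A]
    (D : ∀ ⦃i j : V⦄, (i ⟶ j) → (A ⥤ A))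
    (hDexact : ∀ ⦃i j : V⦄ (a : i ⟶ j),
      Nonempty (PreservesFiniteLimits (D a)) ∧ Nonempty (PreservesFiniteColimits (D a)))
    (hDcoprod : ∀ ⦃i j : V⦄ (a : i ⟶ j) (ι : Type v),
      Nonempty (PreservesColimitsOfShape (Discrete ι) (D a)))
    (Q : V → A → Prop)
    (hQcompat : ∀ ⦃i j : V⦄ (a : i ⟶ j) (X : A), Q i X → Q j ((D a).obj X))
    (M N : DiaRep D) (ω : DiaRepHom D M N)
    (hρ : ∀ (i : V) (ρ : pushout (latchMap D M i) (latchHom D ω i) ⟶ N.obj i),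
      pushout.inl _ _ ≫ ρ = ω.app i → pushout.inr _ _ ≫ ρ = latchMap D N i →
      Mono ρ ∧ Q i (cokernel ρ)) :
    ∀ i : V, Mono (ω.app i) :=
  stmt18_general hV D hDexact Q M N ω hρ
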